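/- For every pair of infinite-dimensional real Banach spaces Y and X, one has K_f(Y) · J_f(X) ≤ 2 · e_1^f(Y, X). -/

import Mathlib

/-- The (Chebyshev) radius of a subset of a normed space:
`r(A) = inf_{b ∈ X} sup_{a ∈ A} ‖a − b‖`. -/
noncomputable def radius {X : Type} [SeminormedAddCommGroup X] (A : Set X) : ℝ :=
  ⨅ b : X, ⨆ a : A, ‖(a : X) - b‖

/-- The finite Jung constant
`J_f(X) = sup {2 r(A)/δ(A) : A ⊆ X finite, δ(A) > 0}`. -/
noncomputable def JungF (X : Type) [SeminormedAddCommGroup X] : ℝ :=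
  sSup {c : ℝ | ∃ A : Set X, A.Finite ∧ 0 < Metric.diam A ∧
    c = 2 * radius A / Metric.diam A}

/-- The finite Kottman constant: the supremum of those `r > 0` such that for every
`n` the closed unit ball contains `n` points with pairwise distances `≥ r`. -/
noncomputable def KottmanF (Y : Type) [SeminormedAddCommGroup Y] : ℝ :=
  sSup {r : ℝ | 0 < r ∧ ∀ n : ℕ, ∃ A : Finset Y, A.card = n ∧
    (∀ y ∈ A, ‖y‖ ≤ 1) ∧ ∀ y ∈ A, ∀ z ∈ A, y ≠ z → r ≤ ‖y - z‖}

/-- `e₁ᶠ(Y, X)`: the infimum of all `l > 0` such that every Lipschitz map from a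
finite subset `M ⊆ Y` into `X` extends to any one extra point with Lipschitz
constant multiplied by at most `l`. -/
noncomputable def e1f (Y X : Type) [SeminormedAddCommGroup Y] [SeminormedAddCommGroup X] : ℝ :=
  sInf {l : ℝ | 0 < l ∧ ∀ (M : Set Y), M.Finite → ∀ (p : Y)
    (f : M → X) (K : NNReal), LipschitzWith K f →
    ∃ F : ↥(insert p M : Set Y) → X, LipschitzWith (l.toNNReal * K) F ∧
      ∀ (y : Y) (hy : y ∈ M), F ⟨y, Set.mem_insert_of_mem p hy⟩ = f ⟨y, hy⟩}

/-- `l = 2` is always admissible for one-point Lipschitz extension. -/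
lemma two_mem_e1f_set (Y X : Type) [SeminormedAddCommGroup Y] [SeminormedAddCommGroup X] :
    (2 : ℝ) ∈ {l : ℝ | 0 < l ∧ ∀ (M : Set Y), M.Finite → ∀ (p : Y)
    (f : M → X) (K : NNReal), LipschitzWith K f →
    ∃ F : ↥(insert p M : Set Y) → X, LipschitzWith (l.toNNReal * K) F ∧
      ∀ (y : Y) (hy : y ∈ M), F ⟨y, Set.mem_insert_of_mem p hy⟩ = f ⟨y, hy⟩} := by
  classical
  refine ⟨by norm_num, fun M hM p f K hf => ?_⟩
  have h2 : (2 : ℝ).toNNReal = 2 := by norm_num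
  rcases M.eq_empty_or_nonempty with hMe | hMne
  · refine ⟨fun _ => 0, LipschitzWith.const' 0, ?_⟩
    intro y hy; rw [hMe] at hy; exact absurd hy (Set.notMem_empty y)
  · obtain ⟨m0, hm0, hmin⟩ := Set.exists_min_image M (fun m => dist m p) hM hMne
    refine ⟨fun x => if h : (x : Y) ∈ M then f ⟨x, h⟩ else f ⟨m0, hm0⟩, ?_, ?_⟩
    · rw [h2]
      apply LipschitzWith.of_dist_le_mul
      intro x y
      by_cases hx : (x : Y) ∈ M
      · by_cases hy : (y : Y) ∈ M
        · simp only [hx, hy, dif_pos]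
          calc dist (f ⟨x, hx⟩) (f ⟨y, hy⟩) ≤ K * dist (⟨(x:Y), hx⟩ : M) ⟨(y:Y), hy⟩ :=
                hf.dist_le_mul _ _
            _ ≤ (2 * K : NNReal) * dist x y := by
                rw [Subtype.dist_eq, Subtype.dist_eq]
                push_cast
                nlinarith [dist_nonneg (x := (x:Y)) (y := (y:Y)), K.coe_nonneg]
        · have hyp : (y : Y) = p := by
            rcases y.2 with h | h
            · exact h
            · exact absurd h hy
          simp only [hx, hy, dif_pos, dif_neg, not_false_iff]
          have h1 : dist (f ⟨(x:Y), hx⟩) (f ⟨m0, hm0⟩) ≤ K * dist (x : Y) m0 := by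
            have := hf.dist_le_mul ⟨(x:Y), hx⟩ ⟨m0, hm0⟩
            rwa [Subtype.dist_eq] at this
          have h3 : dist (x : Y) m0 ≤ dist (x : Y) p + dist m0 p := by
            rw [dist_comm m0 p]; exact dist_triangle _ _ _
          have h4 : dist m0 p ≤ dist (x : Y) p := hmin _ hx
          have h5 : dist x y = dist (x : Y) p := by rw [Subtype.dist_eq, hyp]
          push_cast
          nlinarith [K.coe_nonneg]
      · have hxp : (x : Y) = p := by
          rcases x.2 with h | h
          · exact h
          · exact absurd h hx
        by_cases hy : (y : Y) ∈ M
        · simp only [hx, hy, dif_pos, dif_neg, not_false_iff]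
          have h1 : dist (f ⟨(y:Y), hy⟩) (f ⟨m0, hm0⟩) ≤ K * dist (y : Y) m0 := by
            have := hf.dist_le_mul ⟨(y:Y), hy⟩ ⟨m0, hm0⟩
            rwa [Subtype.dist_eq] at this
          have h3 : dist (y : Y) m0 ≤ dist (y : Y) p + dist m0 p := by
            rw [dist_comm m0 p]; exact dist_triangle _ _ _
          have h4 : dist m0 p ≤ dist (y : Y) p := hmin _ hy
          have h5 : dist x y = dist (y : Y) p := by
            rw [Subtype.dist_eq, hxp, dist_comm]
          rw [dist_comm]
          push_cast
          nlinarith [K.coe_nonneg]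
        · have hxy : x = y := by
            apply Subtype.ext
            rw [hxp]
            rcases y.2 with h | h
            · exact h.symm
            · exact absurd h hy
          rw [hxy]
          simp [dist_nonneg]
    · intro y hy
      simp only [dif_pos hy]

/-- Key estimate: for admissible Kottman `r` and admissible extension constant `l`,
any finite set `A ⊆ X` with positive diameter satisfies `radius A ≤ l * (diam A / r)`. -/
lemma radius_le_aux {Y X : Type} [NormedAddCommGroup Y] [NormedAddCommGroup X]
    (r l : ℝ) (hr : 0 < r)
    (hK : ∀ n : ℕ, ∃ A : Finset Y, A.card = n ∧
      (∀ y ∈ A, ‖y‖ ≤ 1) ∧ ∀ y ∈ A, ∀ z ∈ A, y ≠ z → r ≤ ‖y - z‖)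
    (hl : 0 < l)
    (hle : ∀ (M : Set Y), M.Finite → ∀ (p : Y)
      (f : M → X) (K : NNReal), LipschitzWith K f →
      ∃ F : ↥(insert p M : Set Y) → X, LipschitzWith (l.toNNReal * K) F ∧
        ∀ (y : Y) (hy : y ∈ M), F ⟨y, Set.mem_insert_of_mem p hy⟩ = f ⟨y, hy⟩)
    (A : Set X) (hA : A.Finite) (hdiam : 0 < Metric.diam A) :
    radius A ≤ l * (Metric.diam A / r) := by
  have hAne : A.Nonempty := by
    rcases A.eq_empty_or_nonempty with h | h
    · rw [h, Metric.diam_empty] at hdiam; linarith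
    · exact h
  haveI : Nonempty A := hAne.to_subtype
  have hdr : 0 ≤ Metric.diam A / r := div_nonneg hdiam.le hr.le
  obtain ⟨B, hBcard, hBball, hBsep⟩ := hK hA.toFinset.card
  set e : ↥B ≃ ↥hA.toFinset := Finset.equivOfCardEq hBcard
  set K : NNReal := Real.toNNReal (Metric.diam A / r) with hKdef
  have hKcoe : (K : ℝ) = Metric.diam A / r := Real.coe_toNNReal _ hdr
  set f : (↑B : Set Y) → X := fun y => ((e ⟨y.1, Finset.mem_coe.mp y.2⟩ : ↥hA.toFinset) : X)
    with hfdef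
  have hfA : ∀ y, f y ∈ A := fun y => hA.mem_toFinset.mp (e _).2
  classical
  have hf : LipschitzWith K f := by
    apply LipschitzWith.of_dist_le_mul
    intro u v
    by_cases h : u = v
    · rw [h]; simp [mul_nonneg K.coe_nonneg dist_nonneg]
    · have hne : (u : Y) ≠ (v : Y) := fun hc => h (Subtype.ext hc)
      have hsep : r ≤ ‖(u : Y) - (v : Y)‖ :=
        hBsep _ (Finset.mem_coe.mp u.2) _ (Finset.mem_coe.mp v.2) hne
      have hduv : dist u v = ‖(u : Y) - (v : Y)‖ := by
        rw [Subtype.dist_eq, dist_eq_norm]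
      have hdfA : dist (f u) (f v) ≤ Metric.diam A :=
        Metric.dist_le_diam_of_mem hA.isBounded (hfA u) (hfA v)
      rw [hduv, hKcoe]
      calc dist (f u) (f v) ≤ Metric.diam A := hdfA
        _ = Metric.diam A / r * r := (div_mul_cancel₀ _ hr.ne').symm
        _ ≤ Metric.diam A / r * ‖(u : Y) - (v : Y)‖ :=
            mul_le_mul_of_nonneg_left hsep hdr
  obtain ⟨F, hF, hFext⟩ := hle (↑B) B.finite_toSet 0 f K hf
  set b : X := F ⟨0, Set.mem_insert _ _⟩ with hbdef
  have key : ∀ a : A, ‖(a : X) - b‖ ≤ l * (Metric.diam A / r) := by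
    intro a
    have haT : (a : X) ∈ hA.toFinset := hA.mem_toFinset.mpr a.2
    set y : ↥B := e.symm ⟨(a : X), haT⟩ with hydef
    have hyB : (y : Y) ∈ (↑B : Set Y) := Finset.mem_coe.mpr y.2
    have hfy : f ⟨(y : Y), hyB⟩ = (a : X) := by
      show ((e ⟨(y : Y), Finset.mem_coe.mp hyB⟩ : ↥hA.toFinset) : X) = (a : X)
      have : (⟨(y : Y), Finset.mem_coe.mp hyB⟩ : ↥B) = y := rfl
      rw [this, hydef, Equiv.apply_symm_apply]
    have hFy : F ⟨(y : Y), Set.mem_insert_of_mem 0 hyB⟩ = (a : X) := by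
      rw [hFext _ hyB, hfy]
    have hdist := hF.dist_le_mul ⟨(y : Y), Set.mem_insert_of_mem 0 hyB⟩
      ⟨0, Set.mem_insert _ _⟩
    rw [hFy, ← hbdef] at hdist
    have hdy : dist (⟨(y : Y), Set.mem_insert_of_mem 0 hyB⟩ : ↥(insert 0 (↑B : Set Y)))
        ⟨0, Set.mem_insert _ _⟩ = ‖(y : Y)‖ := by
      rw [Subtype.dist_eq, dist_eq_norm, sub_zero]
    rw [hdy] at hdist
    have hcoe : ((l.toNNReal * K : NNReal) : ℝ) = l * (Metric.diam A / r) := by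
      push_cast
      rw [hKcoe, Real.coe_toNNReal _ hl.le]
    rw [hcoe] at hdist
    have hnorm1 : ‖(y : Y)‖ ≤ 1 := hBball _ y.2
    have hcnn : 0 ≤ l * (Metric.diam A / r) := mul_nonneg hl.le hdr
    calc ‖(a : X) - b‖ = dist (a : X) b := (dist_eq_norm _ _).symm
      _ ≤ l * (Metric.diam A / r) * ‖(y : Y)‖ := hdist
      _ ≤ l * (Metric.diam A / r) * 1 := mul_le_mul_of_nonneg_left hnorm1 hcnn
      _ = l * (Metric.diam A / r) := mul_one _
  have hbdd : BddBelow (Set.range fun b' : X => ⨆ a : A, ‖(a : X) - b'‖) := by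
    refine ⟨0, ?_⟩
    rintro _ ⟨b', rfl⟩
    exact Real.iSup_nonneg fun a => norm_nonneg _
  calc radius A ≤ ⨆ a : A, ‖(a : X) - b‖ := ciInf_le hbdd b
    _ ≤ l * (Metric.diam A / r) := ciSup_le key

/-- For infinite-dimensional Banach spaces `Y, X`: `K_f(Y)·J_f(X) ≤ 2·e₁ᶠ(Y, X)`. -/
theorem kottmanF_mul_jungF_le_two_mul_e1f
    (Y X : Type) [NormedAddCommGroup Y] [NormedSpace ℝ Y] [CompleteSpace Y]
    [NormedAddCommGroup X] [NormedSpace ℝ X] [CompleteSpace X]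
    (hY : ¬ FiniteDimensional ℝ Y) (hX : ¬ FiniteDimensional ℝ X) :
    KottmanF Y * JungF X ≤ 2 * e1f Y X := by
  set S := {l : ℝ | 0 < l ∧ ∀ (M : Set Y), M.Finite → ∀ (p : Y)
    (f : M → X) (K : NNReal), LipschitzWith K f →
    ∃ F : ↥(insert p M : Set Y) → X, LipschitzWith (l.toNNReal * K) F ∧
      ∀ (y : Y) (hy : y ∈ M), F ⟨y, Set.mem_insert_of_mem p hy⟩ = f ⟨y, hy⟩} with hSdef
  have hSne : S.Nonempty := ⟨2, two_mem_e1f_set Y X⟩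
  -- main step: K_f(Y) * J_f(X) ≤ 2 * l for every l ∈ S
  have main : ∀ l ∈ S, KottmanF Y * JungF X ≤ 2 * l := by
    rintro l ⟨hl, hle⟩
    have hKnonneg : 0 ≤ KottmanF Y :=
      Real.sSup_nonneg fun r hr => hr.1.le
    -- for each admissible r, J_f(X) ≤ 2 l / r
    have step : ∀ r : ℝ, (0 < r ∧ ∀ n : ℕ, ∃ A : Finset Y, A.card = n ∧
        (∀ y ∈ A, ‖y‖ ≤ 1) ∧ ∀ y ∈ A, ∀ z ∈ A, y ≠ z → r ≤ ‖y - z‖) →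
        JungF X ≤ 2 * l / r := by
      rintro r ⟨hr, hK⟩
      apply Real.sSup_le
      · rintro c ⟨A, hA, hdiam, rfl⟩
        have hrad := radius_le_aux r l hr hK hl hle A hA hdiam
        rw [div_le_div_iff₀ hdiam hr]
        calc 2 * radius A * r ≤ 2 * (l * (Metric.diam A / r)) * r := by
              nlinarith
          _ = 2 * l * Metric.diam A := by field_simp
      · positivity
    rcases le_or_gt (JungF X) 0 with hJ | hJ
    · calc KottmanF Y * JungF X ≤ 0 := mul_nonpos_of_nonneg_of_nonpos hKnonneg hJ
        _ ≤ 2 * l := by positivity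
    · have hKle : KottmanF Y ≤ 2 * l / JungF X := by
        apply Real.sSup_le
        · rintro r hr
          rw [le_div_iff₀ hJ]
          have h2 := step r hr
          rw [le_div_iff₀ hr.1] at h2
          linarith [mul_comm r (JungF X)]
        · positivity
      calc KottmanF Y * JungF X ≤ (2 * l / JungF X) * JungF X :=
            mul_le_mul_of_nonneg_right hKle hJ.le
        _ = 2 * l := by field_simp
  -- conclude via the infimum
  have : KottmanF Y * JungF X / 2 ≤ e1f Y X := by
    apply le_csInf hSne
    intro l hlS
    have := main l hlS
    linarith
  linarith
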